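/- arXiv:1409.0125 — 2 statements merged into one kernel-verified Lean document; each statement's English description precedes it below -/
import Mathlib

section
/- A pattern group P of depth d is minimal if and only if P equals the restriction G_P|_{X^[d]}, i.e., if and only if every pattern in P is realized as the restriction to X^[d] of some element of G_P. -/
open List

/-- The group of automorphisms of the rooted tree `X*` (vertices = words over `X`,
root = empty word, edges `(v, vx)`), as a subgroup of the permutations of `List X`. -/
def treeAut (X : Type*) : Subgroup (Equiv.Perm (List X)) where
  carrier := {f | f [] = [] ∧ ∀ (v : List X) (x : X), ∃ y : X, f (v ++ [x]) = f v ++ [y]}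
  one_mem' := ⟨rfl, fun _ x => ⟨x, rfl⟩⟩
  mul_mem' := by
    rintro f g ⟨hf0, hf⟩ ⟨hg0, hg⟩
    refine ⟨by simp [Equiv.Perm.mul_apply, hg0, hf0], fun v x => ?_⟩
    obtain ⟨y, hy⟩ := hg v x
    obtain ⟨z, hz⟩ := hf (g v) y
    exact ⟨z, by simp [Equiv.Perm.mul_apply, hy, hz]⟩
  inv_mem' := by
    rintro f ⟨hf0, hf⟩
    have h0 : f⁻¹ [] = ([] : List _) := by
      have h : f⁻¹ (f []) = [] := by simp
      rwa [hf0] at h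
    refine ⟨h0, fun v x => ?_⟩
    rcases List.eq_nil_or_concat (f⁻¹ (v ++ [x])) with h | ⟨w, z, hw⟩
    · exfalso
      have h1 : v ++ [x] = f ([] : List _) := by
        have := congrArg (fun t => f t) h
        simpa using this
      rw [hf0] at h1
      simp at h1
    · rw [List.concat_eq_append] at hw
      obtain ⟨y, hy⟩ := hf w z
      have h2 : f w ++ [y] = v ++ [x] := by
        rw [← hy]
        have := congrArg (fun t => f t) hw
        simpa using this.symm
      have h3 := (List.append_inj' h2 rfl).1
      have h4 : w = f⁻¹ v := by rw [← h3]; simp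
      exact ⟨z, by rw [hw, h4]⟩

theorem treeAut.length_apply {X : Type*} {f : Equiv.Perm (List X)} (hf : f ∈ treeAut X)
    (v : List X) : (f v).length = v.length := by
  induction v using List.reverseRecOn with
  | nil => simp [hf.1]
  | append_singleton v x ih =>
      obtain ⟨y, hy⟩ := hf.2 v x
      simp [hy, ih]

/-- The section function: `sectFun f v w` is the word `u` with `f (v ++ w) = f v ++ u`. -/
def sectFun {X : Type*} (f : Equiv.Perm (List X)) (v w : List X) : List X :=
  (f (v ++ w)).drop v.length

theorem treeAut.apply_append {X : Type*} {f : Equiv.Perm (List X)} (hf : f ∈ treeAut X)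
    (v w : List X) : f (v ++ w) = f v ++ sectFun f v w := by
  have hpre : f v <+: f (v ++ w) := by
    induction w using List.reverseRecOn with
    | nil => simp
    | append_singleton w x ih =>
        obtain ⟨y, hy⟩ := hf.2 (v ++ w) x
        rw [← List.append_assoc, hy]
        exact ih.trans (List.prefix_append _ _)
  obtain ⟨t, ht⟩ := hpre
  have hd : sectFun f v w = t := by
    simp only [sectFun]
    rw [← ht, ← treeAut.length_apply hf v, List.drop_left]
  rw [hd, ht]

/-- The section of a tree automorphism `g` at a vertex `v`, as a tree automorphism. -/
def sect {X : Type*} (g : ↥(treeAut X)) (v : List X) : ↥(treeAut X) := by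
  refine ⟨{ toFun := sectFun (g : Equiv.Perm (List X)) v
            invFun := sectFun ((g : Equiv.Perm (List X))⁻¹) ((g : Equiv.Perm (List X)) v)
            left_inv := ?_
            right_inv := ?_ }, ?_, ?_⟩
  · intro w
    show sectFun _ _ (sectFun _ _ _) = w
    have ha := treeAut.apply_append g.2 v w
    simp only [sectFun] at ha ⊢
    rw [← ha, (by simp : (g : Equiv.Perm (List X))⁻¹ ((g : Equiv.Perm (List X)) (v ++ w)) = v ++ w), treeAut.length_apply g.2, List.drop_left]
  · intro w
    have hginv : (g : Equiv.Perm (List X))⁻¹ ∈ treeAut X := (treeAut X).inv_mem g.2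
    show sectFun _ _ (sectFun _ _ _) = w
    have key : (v : List X) ++ sectFun ((g : Equiv.Perm (List X))⁻¹) ((g : Equiv.Perm (List X)) v) w
        = (g : Equiv.Perm (List X))⁻¹ ((g : Equiv.Perm (List X)) v ++ w) := by
      have h1 := treeAut.apply_append hginv ((g : Equiv.Perm (List X)) v) w
      have h2 : (g : Equiv.Perm (List X))⁻¹ ((g : Equiv.Perm (List X)) v) = v := by simp
      rw [h1, h2]
    simp only [sectFun]
    simp only [sectFun] at key
    rw [key]
    simp [treeAut.length_apply g.2]
  · show sectFun _ _ [] = []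
    simp only [sectFun, List.append_nil]
    exact List.drop_eq_nil_of_le (le_of_eq (treeAut.length_apply g.2 v))
  · intro w x
    show ∃ y, sectFun _ _ (w ++ [x]) = sectFun _ _ w ++ [y]
    obtain ⟨y, hy⟩ := g.2.2 (v ++ w) x
    refine ⟨y, ?_⟩
    simp only [sectFun]
    rw [← List.append_assoc, hy, List.drop_append_of_le_length]
    rw [treeAut.length_apply g.2]
    simp

theorem sect_apply {X : Type*} (g : ↥(treeAut X)) (v w : List X) :
    ((sect g v : ↥(treeAut X)) : Equiv.Perm (List X)) w
      = sectFun (g : Equiv.Perm (List X)) v w := rfl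

theorem sect_nil {X : Type*} (g : ↥(treeAut X)) : sect g [] = g := by
  apply Subtype.ext
  apply Equiv.ext
  intro w
  rw [sect_apply]
  simp [sectFun]

theorem sect_append {X : Type*} (g : ↥(treeAut X)) (v u : List X) :
    sect g (v ++ u) = sect (sect g v) u := by
  apply Subtype.ext
  apply Equiv.ext
  intro w
  show sectFun (g : Equiv.Perm (List X)) (v ++ u) w
    = sectFun ((sect g v : ↥(treeAut X)) : Equiv.Perm (List X)) u w
  simp only [sectFun, sect_apply]
  rw [List.append_assoc, List.drop_drop, List.length_append, Nat.add_comm]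

theorem sect_one {X : Type*} (v : List X) : sect (1 : ↥(treeAut X)) v = 1 := by
  apply Subtype.ext
  apply Equiv.ext
  intro w
  rw [sect_apply]
  simp [sectFun]

theorem sect_mul {X : Type*} (g h : ↥(treeAut X)) (v : List X) :
    sect (g * h) v = sect g ((h : Equiv.Perm (List X)) v) * sect h v := by
  apply Subtype.ext
  apply Equiv.ext
  intro w
  show (((g * h : ↥(treeAut X)) : Equiv.Perm (List X)) (v ++ w)).drop v.length
      = ((g : Equiv.Perm (List X)) ((h : Equiv.Perm (List X)) v
          ++ sectFun (h : Equiv.Perm (List X)) v w)).drop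
            ((h : Equiv.Perm (List X)) v).length
  have hcoe : ((g * h : ↥(treeAut X)) : Equiv.Perm (List X)) (v ++ w)
      = (g : Equiv.Perm (List X)) ((h : Equiv.Perm (List X)) (v ++ w)) := rfl
  have hh := treeAut.apply_append h.2 v w
  rw [hcoe, hh, treeAut.length_apply h.2]

theorem sect_inv {X : Type*} (g : ↥(treeAut X)) (v : List X) :
    sect g⁻¹ v = (sect g (((g : Equiv.Perm (List X))⁻¹) v))⁻¹ := by
  have h1 : sect (g * g⁻¹) v = 1 := by rw [mul_inv_cancel, sect_one]
  have h2 := (sect_mul g g⁻¹ v).symm.trans h1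
  exact eq_inv_of_mul_eq_one_right h2

/-- The automorphism group of the finite subtree `X^[d]` of words of length at most `d`
is modelled inside the permutations of the set of such words. -/
abbrev Pat (X : Type*) (d : ℕ) := Equiv.Perm {l : List X // l.length ≤ d}

/-- The restriction homomorphism `Aut X* → Sym(X^[d])`. -/
def restr (X : Type*) (d : ℕ) : ↥(treeAut X) →* Pat X d where
  toFun g :=
    { toFun := fun w => ⟨(g : Equiv.Perm (List X)) w.1,
        by rw [treeAut.length_apply g.2]; exact w.2⟩
      invFun := fun w => ⟨(g : Equiv.Perm (List X))⁻¹ w.1,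
        by rw [treeAut.length_apply ((treeAut X).inv_mem g.2)]; exact w.2⟩
      left_inv := fun w => by
        apply Subtype.ext
        simp
      right_inv := fun w => by
        apply Subtype.ext
        simp }
  map_one' := by
    apply Equiv.ext
    intro w
    rfl
  map_mul' := fun g h => by
    apply Equiv.ext
    intro w
    rfl

/-- `Aut X^[d]`: the automorphism group of the finite tree `X^[d]`, realized as the
image of `Aut X*` under restriction (every automorphism of the finite tree extends). -/
def finAut (X : Type*) (d : ℕ) : Subgroup (Pat X d) := (restr X d).range

/-- The `n`-th level stabilizer in `Aut X*`: automorphisms fixing all words of length `≤ n`. -/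
def levelStab (X : Type*) (n : ℕ) : Subgroup ↥(treeAut X) := (restr X n).ker

/-- The self-similar group of finite type `G_P` given by a pattern group `P ≤ Aut X^[d]`:
all tree automorphisms all of whose sections restrict to elements of `P` on `X^[d]`. -/
def GP (X : Type*) (d : ℕ) (P : Subgroup (Pat X d)) : Subgroup ↥(treeAut X) where
  carrier := {g | ∀ v : List X, restr X d (sect g v) ∈ P}
  one_mem' := fun v => by rw [sect_one, map_one]; exact P.one_mem
  mul_mem' := fun {a b} ha hb v => by
    rw [sect_mul, map_mul]; exact P.mul_mem (ha _) (hb v)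
  inv_mem' := fun {a} ha v => by
    rw [sect_inv, map_inv]; exact P.inv_mem (ha _)

theorem mem_GP {X : Type*} {d : ℕ} {P : Subgroup (Pat X d)} (g : ↥(treeAut X)) :
    g ∈ GP X d P ↔ ∀ v : List X, restr X d (sect g v) ∈ P := Iff.rfl

/-- The edge relation `a →^x b` of the pattern graph `Γ_P`: the section of the pattern `a`
at the letter `x` agrees with the pattern `b` on `X^[d-1]`. -/
def patEdge (X : Type*) (d : ℕ) (a : Pat X d) (x : X) (b : Pat X d) : Prop :=
  ∀ (w : List X) (hw : w.length ≤ d - 1) (hw' : (x :: w).length ≤ d),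
    ((a ⟨x :: w, hw'⟩ : {l : List X // l.length ≤ d}) : List X).tail
      = ((b ⟨w, le_trans hw (Nat.sub_le d 1)⟩ : {l : List X // l.length ≤ d}) : List X)

/-- The subgroup of `Sym(X^[d])` of elements fixing all words of length at most `k`. -/
def patLevelStab (X : Type*) (d k : ℕ) : Subgroup (Pat X d) where
  carrier := {a | ∀ (w : List X) (hw : w.length ≤ d), w.length ≤ k → a ⟨w, hw⟩ = ⟨w, hw⟩}
  one_mem' := fun _ _ _ => rfl
  mul_mem' := fun {a b} ha hb w hw hk => by
    have h1 := hb w hw hk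
    have h2 := ha w hw hk
    show a (b ⟨w, hw⟩) = ⟨w, hw⟩
    rw [h1, h2]
  inv_mem' := fun {a} ha w hw hk => by
    have h1 := ha w hw hk
    have h2 : a⁻¹ (a ⟨w, hw⟩) = ⟨w, hw⟩ := by simp
    rwa [h1] at h2

/-- Level-transitivity: the group acts transitively on every level `X^n` of the tree. -/
def LevelTrans {X : Type*} (G : Subgroup ↥(treeAut X)) : Prop :=
  ∀ u v : List X, u.length = v.length → ∃ g ∈ G, (g : Equiv.Perm (List X)) u = v

/-- Topological finite generation of a closed subgroup `G ≤ Aut X*`, expressed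
concretely: some finite subset of `G` generates a subgroup which is dense in `G`
for the profinite (congruence) topology of `Aut X*`. -/
def TopFG {X : Type*} (G : Subgroup ↥(treeAut X)) : Prop :=
  ∃ S : Finset ↥(treeAut X), (S : Set ↥(treeAut X)) ⊆ (G : Set ↥(treeAut X)) ∧
    ∀ g ∈ G, ∀ n : ℕ, ∃ h ∈ Subgroup.closure (S : Set ↥(treeAut X)),
      ∀ w : List X, w.length ≤ n →
        (h : Equiv.Perm (List X)) w = (g : Equiv.Perm (List X)) w


/-- A pattern group `P` of depth `d` is minimal if every pattern group defining the same
self-similar group of finite type contains it. -/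
def IsMinimalPattern (X : Type*) (d : ℕ) (P : Subgroup (Pat X d)) : Prop :=
  ∀ Q : Subgroup (Pat X d), Q ≤ finAut X d → GP X d P = GP X d Q → P ≤ Q

/-! The restriction `G_P|_(X^[d])` is the least pattern group defining `G_P`: it lies in `P`, it
defines `G_P` again because sections of elements of `G_P` stay in `G_P`, and any `Q` with
`G_Q = G_P` contains it because `g` is its own section at the root. Hence `P` is minimal
exactly when it equals this restriction. -/

section PatternGroup

variable {X : Type*} {d : ℕ} {P Q : Subgroup (Pat X d)}

theorem sect_mem_GP {g : ↥(treeAut X)} (hg : g ∈ GP X d P) (v : List X) :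
    sect g v ∈ GP X d P := fun u => by
  rw [← sect_append]
  exact hg (v ++ u)

theorem restr_mem_of_mem_GP {g : ↥(treeAut X)} (hg : g ∈ GP X d P) : restr X d g ∈ P := by
  simpa only [sect_nil] using hg []

theorem map_restr_GP_le : (GP X d P).map (restr X d) ≤ P := by
  rintro _ ⟨g, hg, rfl⟩
  exact restr_mem_of_mem_GP hg

theorem GP_map_restr_GP : GP X d ((GP X d P).map (restr X d)) = GP X d P :=
  le_antisymm (fun _ hg v => map_restr_GP_le (hg v))
    (fun g hg v => ⟨sect g v, sect_mem_GP hg v, rfl⟩)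

theorem map_restr_GP_le_of_GP_eq (h : GP X d P = GP X d Q) :
    (GP X d P).map (restr X d) ≤ Q :=
  h ▸ map_restr_GP_le

end PatternGroup

theorem statement7_general {X : Type*} (d : ℕ)
    (P : Subgroup (Pat X d)) :
    IsMinimalPattern X d P ↔ P = Subgroup.map (restr X d) (GP X d P) := by
  constructor
  · intro hmin
    exact le_antisymm
      (hmin _ (Subgroup.map_le_range _ _) GP_map_restr_GP.symm) map_restr_GP_le
  · intro hP Q _ hPQ
    rw [hP]
    exact map_restr_GP_le_of_GP_eq hPQ

/-- `P` is minimal iff `P` equals the restriction `G_P|_(X^[d])`, i.e. iff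
every pattern of `P` is realized as the restriction of an element of `G_P`. -/
theorem statement7 {X : Type*} [Fintype X] [Nontrivial X] (d : ℕ) (hd : 1 ≤ d)
    (P : Subgroup (Pat X d)) (hP : P ≤ finAut X d) :
    IsMinimalPattern X d P ↔ P = Subgroup.map (restr X d) (GP X d P) :=
  statement7_general d P
end

section
/- Every element g of G_P defines a homomorphism of labeled directed graphs φ: X* → Γ_P by φ(v) = g_{(v)}|_{X^[d]}, and conversely every homomorphism of labeled directed graphs φ: X* → Γ_P arises in this way from a unique element g ∈ G_P. -/
open List

/-! A tree automorphism is determined by its portrait, the permutation of `X` it induces below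
each vertex, and every portrait is realised (`ofPortrait`). Given a graph homomorphism
`φ : X* → Γ_P`, each `φ v ∈ P ≤ Aut X^[d]` is the restriction of some automorphism `ψ v`, and
the automorphism `g` with portrait `v ↦ rootPerm (ψ v)` satisfies `g_(v)|_(X^[d]) = φ v`: by
induction on words of `X^[d]`, the edge `φ v →^x φ (vx)` identifies what `φ v` does below `x`
with `φ (vx)`. Since `d ≥ 1`, the restrictions `g_(v)|_(X^[d])` determine the whole portrait
of `g`, whence uniqueness. -/

namespace treeAut

variable {X : Type*}

theorem exists_apply_singleton (g : ↥(treeAut X)) (x : X) :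
    ∃ y, (g : Equiv.Perm (List X)) [x] = [y] := by
  obtain ⟨y, hy⟩ := g.2.2 [] x
  exact ⟨y, by simpa [g.2.1] using hy⟩

noncomputable def rootFun (g : ↥(treeAut X)) (x : X) : X := (exists_apply_singleton g x).choose

theorem apply_singleton_eq_rootFun (g : ↥(treeAut X)) (x : X) :
    (g : Equiv.Perm (List X)) [x] = [rootFun g x] :=
  (exists_apply_singleton g x).choose_spec

theorem rootFun_inv_rootFun (g : ↥(treeAut X)) (x : X) : rootFun g⁻¹ (rootFun g x) = x := by
  have h : (g⁻¹ : Equiv.Perm (List X)) ((g : Equiv.Perm (List X)) [x]) = [x] := by simp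
  rw [apply_singleton_eq_rootFun g, ← Subgroup.coe_inv, apply_singleton_eq_rootFun] at h
  exact List.singleton_inj.mp h

noncomputable def rootPerm (g : ↥(treeAut X)) : Equiv.Perm X where
  toFun := rootFun g
  invFun := rootFun g⁻¹
  left_inv := rootFun_inv_rootFun g
  right_inv x := by simpa using rootFun_inv_rootFun g⁻¹ x

theorem apply_singleton (g : ↥(treeAut X)) (x : X) :
    (g : Equiv.Perm (List X)) [x] = [rootPerm g x] :=
  apply_singleton_eq_rootFun g x

theorem apply_cons (g : ↥(treeAut X)) (x : X) (w : List X) :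
    (g : Equiv.Perm (List X)) (x :: w) = rootPerm g x :: (sect g [x] : Equiv.Perm (List X)) w := by
  rw [sect_apply, ← List.singleton_append, apply_append g.2, apply_singleton]
  rfl

theorem apply_append_singleton (g : ↥(treeAut X)) (v : List X) (x : X) :
    (g : Equiv.Perm (List X)) (v ++ [x]) =
      (g : Equiv.Perm (List X)) v ++ [rootPerm (sect g v) x] := by
  rw [apply_append g.2, ← apply_singleton, sect_apply]

theorem apply_eq_of_rootPerm_sect_eq {g h : ↥(treeAut X)}
    (hgh : ∀ v, rootPerm (sect g v) = rootPerm (sect h v)) (w : List X) :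
    (g : Equiv.Perm (List X)) w = (h : Equiv.Perm (List X)) w := by
  induction w using List.reverseRecOn with
  | nil => rw [g.2.1, h.2.1]
  | append_singleton v x ih => rw [apply_append_singleton, apply_append_singleton, ih, hgh]

theorem ext_rootPerm_sect {g h : ↥(treeAut X)}
    (hgh : ∀ v, rootPerm (sect g v) = rootPerm (sect h v)) : g = h :=
  Subtype.ext (Equiv.ext (apply_eq_of_rootPerm_sect_eq hgh))

end treeAut

section Portrait

variable {X : Type*}

/-- The tree map with portrait `σ`: a vertex `v` acts on the letter following it by `σ v`. -/
def portraitFun : (List X → Equiv.Perm X) → List X → List X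
  | _, [] => []
  | σ, x :: w => σ [] x :: portraitFun (fun v => σ (x :: v)) w

def portraitInvFun : (List X → Equiv.Perm X) → List X → List X
  | _, [] => []
  | σ, y :: w => (σ [])⁻¹ y :: portraitInvFun (fun v => σ ((σ [])⁻¹ y :: v)) w

theorem portraitInvFun_portraitFun (σ : List X → Equiv.Perm X) (w : List X) :
    portraitInvFun σ (portraitFun σ w) = w := by
  induction w generalizing σ with
  | nil => rfl
  | cons x w ih =>
    simp only [portraitFun, portraitInvFun, Equiv.Perm.coe_inv, Equiv.symm_apply_apply, ih]

theorem portraitFun_portraitInvFun (σ : List X → Equiv.Perm X) (w : List X) :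
    portraitFun σ (portraitInvFun σ w) = w := by
  induction w generalizing σ with
  | nil => rfl
  | cons y w ih =>
    simp only [portraitFun, portraitInvFun, Equiv.Perm.coe_inv, Equiv.apply_symm_apply, ih]

theorem portraitFun_append_singleton (σ : List X → Equiv.Perm X) (v : List X) (x : X) :
    portraitFun σ (v ++ [x]) = portraitFun σ v ++ [σ v x] := by
  induction v generalizing σ with
  | nil => rfl
  | cons y v ih => exact congrArg (σ [] y :: ·) (ih _)

def ofPortrait (σ : List X → Equiv.Perm X) : ↥(treeAut X) :=
  ⟨⟨portraitFun σ, portraitInvFun σ, portraitInvFun_portraitFun σ, portraitFun_portraitInvFun σ⟩,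
    rfl, fun v x => ⟨σ v x, portraitFun_append_singleton σ v x⟩⟩

theorem rootPerm_sect_ofPortrait (σ : List X → Equiv.Perm X) (v : List X) :
    treeAut.rootPerm (sect (ofPortrait σ) v) = σ v := by
  ext x
  have h : portraitFun σ v ++ [treeAut.rootPerm (sect (ofPortrait σ) v) x] =
      portraitFun σ v ++ [σ v x] :=
    (treeAut.apply_append_singleton (ofPortrait σ) v x).symm.trans
      (portraitFun_append_singleton σ v x)
  exact List.singleton_inj.mp (List.append_cancel_left h)

end Portrait

section Patterns

variable {X : Type*} {d : ℕ}

open treeAut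

theorem restr_apply_coe (g : ↥(treeAut X)) (w : {l : List X // l.length ≤ d}) :
    ((restr X d g w : {l : List X // l.length ≤ d}) : List X) = (g : Equiv.Perm (List X)) w :=
  rfl

theorem restr_eq_restr_iff {g h : ↥(treeAut X)} :
    restr X d g = restr X d h ↔
      ∀ w : List X, w.length ≤ d → (g : Equiv.Perm (List X)) w = (h : Equiv.Perm (List X)) w := by
  refine ⟨fun hgh w hw => ?_, fun hgh => Equiv.ext fun w => Subtype.ext (hgh w w.2)⟩
  simpa only [restr_apply_coe] using congrArg Subtype.val (DFunLike.congr_fun hgh ⟨w, hw⟩)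

theorem rootPerm_eq_of_restr_eq (hd : 1 ≤ d) {g h : ↥(treeAut X)}
    (hgh : restr X d g = restr X d h) : rootPerm g = rootPerm h := by
  ext x
  have hx := restr_eq_restr_iff.mp hgh [x] hd
  rw [apply_singleton, apply_singleton] at hx
  exact List.singleton_inj.mp hx

theorem eq_of_restr_sect_eq (hd : 1 ≤ d) {g h : ↥(treeAut X)}
    (hgh : ∀ v, restr X d (sect g v) = restr X d (sect h v)) : g = h :=
  ext_rootPerm_sect fun v => rootPerm_eq_of_restr_eq hd (hgh v)

theorem patEdge_restr_iff {g h : ↥(treeAut X)} {x : X} :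
    patEdge X d (restr X d g) x (restr X d h) ↔
      ∀ w : List X, w.length < d →
        (sect g [x] : Equiv.Perm (List X)) w = (h : Equiv.Perm (List X)) w := by
  simp only [patEdge, restr_apply_coe, apply_cons, List.tail_cons, List.length_cons]
  exact ⟨fun hgh w hw => hgh w (by omega) hw, fun hgh w _ hw => hgh w hw⟩

theorem restr_sect_eq_of_rootPerm_sect_eq {g : ↥(treeAut X)} {ψ : List X → ↥(treeAut X)}
    (hroot : ∀ v, rootPerm (sect g v) = rootPerm (ψ v))
    (hedge : ∀ v x, patEdge X d (restr X d (ψ v)) x (restr X d (ψ (v ++ [x])))) (v : List X) :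
    restr X d (sect g v) = restr X d (ψ v) := by
  suffices key : ∀ w : List X, w.length ≤ d → ∀ v,
      (sect g v : Equiv.Perm (List X)) w = (ψ v : Equiv.Perm (List X)) w from
    restr_eq_restr_iff.mpr fun w hw => key w hw v
  intro w
  induction w with
  | nil => intro _ v; rw [(sect g v).2.1, (ψ v).2.1]
  | cons x w ih =>
    intro hw v
    have hwd : w.length < d := hw
    rw [apply_cons, apply_cons, ← sect_append, ih hwd.le, hroot,
      patEdge_restr_iff.mp (hedge v x) w hwd]

end Patterns

theorem statement12_general {X : Type*} (d : ℕ) (hd : 1 ≤ d)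
    (P : Subgroup (Pat X d)) (hP : P ≤ finAut X d) :
    (∀ g ∈ GP X d P, (∀ v : List X, restr X d (sect g v) ∈ P) ∧
      ∀ (v : List X) (x : X),
        patEdge X d (restr X d (sect g v)) x (restr X d (sect g (v ++ [x])))) ∧
    (∀ φ : List X → Pat X d, (∀ v : List X, φ v ∈ P) →
      (∀ (v : List X) (x : X), patEdge X d (φ v) x (φ (v ++ [x]))) →
      ∃! g : ↥(treeAut X), g ∈ GP X d P ∧ ∀ v : List X, restr X d (sect g v) = φ v) := by
  refine ⟨fun g hg => ⟨hg, fun v x => patEdge_restr_iff.mpr fun w _ => by rw [sect_append]⟩, ?_⟩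
  intro φ hφP hφedge
  choose ψ hψ using fun v => hP (hφP v)
  set g := ofPortrait fun v => treeAut.rootPerm (ψ v)
  have hg : ∀ v, restr X d (sect g v) = φ v := fun v => by
    rw [← hψ v]
    refine restr_sect_eq_of_rootPerm_sect_eq (rootPerm_sect_ofPortrait _) (fun v x => ?_) v
    rw [hψ, hψ]
    exact hφedge v x
  exact ⟨g, ⟨fun v => hg v ▸ hφP v, hg⟩,
    fun g' ⟨_, hg'⟩ => eq_of_restr_sect_eq hd fun v => (hg' v).trans (hg v).symm⟩

/-- every `g ∈ G_P` defines a homomorphism of labeled graphs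
`X* → Γ_P`, `v ↦ g_(v)|_(X^[d])`, and conversely every such homomorphism arises from a
unique element of `G_P`. -/
theorem statement12 {X : Type*} [Fintype X] [Nontrivial X] (d : ℕ) (hd : 1 ≤ d)
    (P : Subgroup (Pat X d)) (hP : P ≤ finAut X d) :
    (∀ g ∈ GP X d P, (∀ v : List X, restr X d (sect g v) ∈ P) ∧
      ∀ (v : List X) (x : X),
        patEdge X d (restr X d (sect g v)) x (restr X d (sect g (v ++ [x])))) ∧
    (∀ φ : List X → Pat X d, (∀ v : List X, φ v ∈ P) →
      (∀ (v : List X) (x : X), patEdge X d (φ v) x (φ (v ++ [x]))) →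
      ∃! g : ↥(treeAut X), g ∈ GP X d P ∧ ∀ v : List X, restr X d (sect g v) = φ v) :=
  statement12_general d hd P hP
end
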